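/- arXiv:1111.0545 — 4 statements merged into one kernel-verified Lean document; each statement's English description precedes it below -/
import Mathlib

section
/- With f = X(X−1)(X−α₁)(X−α₂)(X−α₃) ∈ 𝔽_p[X], c_k the coefficient of X^k in f^{(p−1)/2}, F a finite field with p² elements, and f̃ ∈ F[X] the image of f under the embedding 𝔽_p → F, one has ∑_{α ∈ F} ( f̃(α) · f̃(α^p) )^{(p−1)/2} = −( 2·c̃_{p−2}·c̃_{2p−1} + c̃_{p−1}² + c̃_{2p−2}² ), where c̃_k denotes the image of c_k in F. -/
open Polynomial Finset

/-! The summand is the value at `α` of `g(X^p) · g` with `g = f̃^((p-1)/2)`, a polynomial of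
degree `< 3(q - 1)` for `q = p²`. Summing such a polynomial over `F` kills every monomial except
`X^(q-1)` and `X^(2(q-1))`, which contribute `-1` times their coefficient. As `deg g < 3(p - 1)`,
the coefficient of `X^(p(a+1)+r)` in `g(X^p) · g`, for `r < p`, only receives the two products
`g_{a+1} g_r` and `g_a g_{r+p}`; writing `q - 1 = p·(p - 1) + (p - 1)` and
`2(q - 1) = p·(2p - 1) + (p - 2)` gives the four terms of the right-hand side. -/

theorem Polynomial.eval_mul_eval_pow_pow {R : Type*} [CommSemiring R] (f : R[X]) (x : R)
    (p s : ℕ) : (f.eval x * f.eval (x ^ p)) ^ s = (expand R p (f ^ s) * f ^ s).eval x := by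
  rw [eval_mul, expand_eval, eval_pow, eval_pow, mul_pow, mul_comm]

theorem Polynomial.coeff_expand_mul_self {R : Type*} [CommSemiring R] {p r : ℕ} {g : R[X]}
    (hr : r < p) (hg : g.natDegree < r + 2 * p) (a : ℕ) :
    (expand R p g * g).coeff (p * (a + 1) + r) =
      g.coeff (a + 1) * g.coeff r + g.coeff a * g.coeff (r + p) := by
  have hp : 0 < p := by omega
  have hpa : p * (a + 1) = p * a + p := by ring
  rw [coeff_mul, sum_eq_add_of_mem (p * (a + 1), r) (p * a, r + p)]
  · rw [coeff_expand_mul' hp, coeff_expand_mul' hp]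
  · simp
  · simp only [HasAntidiagonal.mem_antidiagonal]; omega
  · simp only [ne_eq, Prod.mk.injEq, not_and]; omega
  · rintro ⟨i, j⟩ hij ⟨h1, h2⟩
    rw [HasAntidiagonal.mem_antidiagonal, hpa] at hij
    rw [coeff_expand hp]
    split_ifs with hdvd
    · obtain ⟨t, rfl⟩ := hdvd
      rw [Nat.mul_div_cancel_left _ hp]
      by_cases hj : j < r + 2 * p
      · exfalso
        have hlo : a ≤ t := by
          by_contra! h
          have := Nat.mul_le_mul_left p (show t + 1 ≤ a from h)
          rw [Nat.mul_add] at this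
          omega
        have hhi : t ≤ a + 1 := by
          by_contra! h
          have := Nat.mul_le_mul_left p (show a + 2 ≤ t from h)
          rw [Nat.mul_add] at this
          omega
        obtain rfl | rfl : t = a ∨ t = a + 1 := by omega
        · exact h2 (Prod.ext rfl (by simp only at hij ⊢; omega))
        · exact h1 (Prod.ext rfl (by simp only at hij ⊢; omega))
      · rw [coeff_eq_zero_of_natDegree_lt (n := j) (by omega), mul_zero]
    · rw [zero_mul]

namespace FiniteField

variable {K : Type*} [Field K] [Fintype K]

local notation "q" => Fintype.card K

theorem sum_pow_of_ne_zero {i : ℕ} (hi : i ≠ 0) :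
    ∑ x : K, x ^ i = if q - 1 ∣ i then -1 else 0 := by
  classical
  let φ : Kˣ ↪ K := ⟨fun x ↦ x, Units.val_injective⟩
  have huniv : univ.map φ = univ \ {0} := by
    ext x
    simp only [mem_map, mem_univ, true_and, mem_sdiff, mem_singleton,
      Function.Embedding.coeFn_mk, φ]
    exact isUnit_iff_ne_zero
  calc
    ∑ x : K, x ^ i = ∑ x ∈ univ \ {(0 : K)}, x ^ i := by
      rw [← sum_sdiff ({0} : Finset K).subset_univ, sum_singleton, zero_pow hi, add_zero]
    _ = ∑ x : Kˣ, (x : K) ^ i := by rw [← huniv, sum_map]; rfl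
    _ = _ := FiniteField.sum_pow_units K i

theorem sum_eval_of_natDegree_lt {G : K[X]} (hG : G.natDegree < 3 * (q - 1)) :
    ∑ x : K, G.eval x = -(G.coeff (q - 1) + G.coeff (2 * (q - 1))) := by
  have hq : 1 < q := Fintype.one_lt_card
  have hvanish : ∀ k < 3 * (q - 1), k ≠ q - 1 → k ≠ 2 * (q - 1) →
      G.coeff k * ∑ x : K, x ^ k = 0 := by
    intro k hk h1 h2
    rcases Nat.eq_zero_or_pos k with rfl | hk0
    · simp
    rw [sum_pow_of_ne_zero hk0.ne', if_neg, mul_zero]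
    rintro ⟨j, rfl⟩
    have : 0 < j := Nat.pos_of_mul_pos_left hk0
    have : j < 3 := by nlinarith
    interval_cases j <;> simp_all [mul_comm]
  calc ∑ x : K, G.eval x = ∑ k ∈ range (3 * (q - 1)), G.coeff k * ∑ x : K, x ^ k := by
        simp_rw [eval_eq_sum_range' hG, mul_sum]
        exact sum_comm
    _ = G.coeff (q - 1) * ∑ x : K, x ^ (q - 1) +
          G.coeff (2 * (q - 1)) * ∑ x : K, x ^ (2 * (q - 1)) :=
        sum_eq_add_of_mem _ _ (mem_range.mpr (by omega)) (mem_range.mpr (by omega)) (by omega)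
          fun k hk hne => hvanish k (mem_range.mp hk) hne.1 hne.2
    _ = _ := by
        rw [sum_pow_of_ne_zero (by omega), sum_pow_of_ne_zero (by omega), if_pos dvd_rfl,
          if_pos (dvd_mul_left _ _)]
        ring

theorem sum_eval_expand_mul_self {p : ℕ} (hK : q = p ^ 2) {g : K[X]}
    (hg : g.natDegree < 3 * (p - 1)) :
    ∑ x : K, (expand K p g * g).eval x =
      -(2 * g.coeff (p - 2) * g.coeff (2 * p - 1) + g.coeff (p - 1) ^ 2 +
        g.coeff (2 * p - 2) ^ 2) := by
  have hp2 : 1 ≤ p ^ 2 := Nat.one_le_pow _ _ (by omega)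
  have hG : (expand K p g * g).natDegree < 3 * (q - 1) := by
    calc _ ≤ p * g.natDegree + g.natDegree :=
          natDegree_mul_le.trans_eq (by rw [natDegree_expand, mul_comm])
      _ < _ := by
          rw [hK]
          zify [hp2, (by omega : 1 ≤ p)] at hg ⊢
          nlinarith
  have hq1 : q - 1 = p * (p - 2 + 1) + (p - 1) := by
    rw [hK]; zify [hp2, (by omega : 2 ≤ p), (by omega : 1 ≤ p)]; ring
  have hq2 : 2 * (q - 1) = p * (2 * p - 2 + 1) + (p - 2) := by
    rw [hK]; zify [hp2, (by omega : 2 ≤ p), (by omega : 2 ≤ 2 * p)]; ring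
  rw [sum_eval_of_natDegree_lt hG, hq2, hq1, coeff_expand_mul_self (by omega) (by omega),
    coeff_expand_mul_self (by omega) (by omega)]
  have e1 : p - 2 + 1 = p - 1 := by omega
  have e2 : p - 1 + p = 2 * p - 1 := by omega
  have e3 : p - 2 + p = 2 * p - 2 := by omega
  have e4 : 2 * p - 2 + 1 = 2 * p - 1 := by omega
  rw [e1, e2, e3, e4]
  ring

end FiniteField

theorem sum_ff_frob_pow_eq_general (p : ℕ)
    (α₁ α₂ α₃ : ZMod p)
    (f : Polynomial (ZMod p))
    (hf : f = X * (X - 1) * (X - C α₁) * (X - C α₂) * (X - C α₃))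
    (c : ℕ → ZMod p) (hc : ∀ k, c k = (f ^ ((p - 1) / 2)).coeff k)
    (F : Type*) [Field F] [Fintype F] (hF : Fintype.card F = p ^ 2)
    (ι : ZMod p →+* F) :
    ∑ α : F, ((f.map ι).eval α * (f.map ι).eval (α ^ p)) ^ ((p - 1) / 2) =
      -(2 * ι (c (p - 2)) * ι (c (2 * p - 1)) +
        ι (c (p - 1)) ^ 2 + ι (c (2 * p - 2)) ^ 2) := by
  have hp : 2 ≤ p := by
    have : 1 < p ^ 2 := hF ▸ Fintype.one_lt_card
    by_contra! h
    interval_cases p <;> simp at this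
  have hdeg : f.natDegree ≤ 5 := by subst hf; compute_degree
  have hg : ((f ^ ((p - 1) / 2)).map ι).natDegree < 3 * (p - 1) :=
    calc _ ≤ (p - 1) / 2 * 5 :=
          natDegree_map_le.trans (natDegree_pow_le.trans (Nat.mul_le_mul_left _ hdeg))
      _ < _ := by omega
  simp_rw [eval_mul_eval_pow_pow, ← Polynomial.map_pow,
    FiniteField.sum_eval_expand_mul_self hF hg, coeff_map, hc]

/-- For the quintic `f = X(X-1)(X-α₁)(X-α₂)(X-α₃)` over `𝔽_p` and `F` a field with `p²`
elements, with `f̃` the image of `f` in `F[X]`, one has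
`∑_{α ∈ F} (f̃(α)·f̃(α^p))^((p-1)/2) = -(2 c̃_{p-2} c̃_{2p-1} + c̃_{p-1}² + c̃_{2p-2}²)`. -/
theorem sum_ff_frob_pow_eq (p : ℕ) [Fact p.Prime] (hp : 5 ≤ p)
    (α₁ α₂ α₃ : ZMod p)
    (h12 : α₁ ≠ α₂) (h13 : α₁ ≠ α₃) (h23 : α₂ ≠ α₃)
    (h10 : α₁ ≠ 0) (h20 : α₂ ≠ 0) (h30 : α₃ ≠ 0)
    (h11 : α₁ ≠ 1) (h21 : α₂ ≠ 1) (h31 : α₃ ≠ 1)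
    (f : Polynomial (ZMod p))
    (hf : f = X * (X - 1) * (X - C α₁) * (X - C α₂) * (X - C α₃))
    (c : ℕ → ZMod p) (hc : ∀ k, c k = (f ^ ((p - 1) / 2)).coeff k)
    (F : Type*) [Field F] [Fintype F] (hF : Fintype.card F = p ^ 2)
    (ι : ZMod p →+* F) :
    ∑ α : F, ((f.map ι).eval α * (f.map ι).eval (α ^ p)) ^ ((p - 1) / 2) =
      -(2 * ι (c (p - 2)) * ι (c (2 * p - 1)) +
        ι (c (p - 1)) ^ 2 + ι (c (2 * p - 2)) ^ 2) :=
  sum_ff_frob_pow_eq_general p α₁ α₂ α₃ f hf c hc F hF ι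
end

section
/- Let S denote the double sum S = ∑_{(a,b) ∈ 𝔽_p × 𝔽_p} ( a·(1+b+a)·∏_{i=1}^{3}(α_i² + α_i·b + a) )^{(p−1)/2} ∈ 𝔽_p. Then, with F a finite field with p² elements, f̃ the image of f in F[X], and ι : 𝔽_p → F the canonical embedding, 2·ι(S) = ∑_{α ∈ F} ( f̃(α)·f̃(α^p) )^{(p−1)/2} + ι( ∑_{(α,β) ∈ 𝔽_p × 𝔽_p} ( f(α)·f(β) )^{(p−1)/2} ). (Equivalently, S equals one half of the sum of these two character-type sums; the terms of S indexed by (a,b) are the values ∏_{c ∈ {0,1,α₁,α₂,α₃}} q(c)^{(p−1)/2} for the monic quadratic q(x) = x² + bx + a.) -/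
/-!
After `b ↦ -b`, the summand of `S` is `G (a, b)`, where
`G (n, t) = (∏_{c ∈ {0, 1, α₁, α₂, α₃}} (c² - c t + n)) ^ ((p - 1) / 2)`, and since
`(x - c) (y - c) = c² - c (x + y) + x y`, the right-hand side is
`∑_{α ∈ F} G (N α, Tr α) + ∑_{(x, y) ∈ 𝔽_p²} G (x y, x + y)`, with `N`, `Tr` the norm and trace
of `F / 𝔽_p`. So it suffices that every `(n, t) ∈ 𝔽_p²` is hit exactly twice by the two maps
`α ↦ (α α^p, α + α^p)` and `(x, y) ↦ (x y, x + y)`. Both fibres consist of orderings of the two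
roots `r, s ∈ F` of `X² - t X + n`: if `r ∉ 𝔽_p` then `s = r^p` and the fibre of the first map
is `{r, s}`; if `r ≠ s` lie in `𝔽_p` the fibre of the second map is `{(r, s), (s, r)}`; and a
double root `r ∈ 𝔽_p` is counted once by each map.
-/

open Polynomial Finset

theorem eq_and_eq_or_eq_and_eq_of_add_eq_of_mul_eq {R : Type*} [CommRing R] [IsDomain R]
    {r s x y : R} (hadd : x + y = r + s) (hmul : x * y = r * s) :
    x = r ∧ y = s ∨ x = s ∧ y = r := by
  have hy : y = r + s - x := eq_sub_of_add_eq' hadd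
  have : (x - r) * (x - s) = 0 := by linear_combination x * hadd - hmul
  rcases mul_eq_zero.mp this with hx | hx
  · exact .inl ⟨sub_eq_zero.mp hx, by rw [hy, sub_eq_zero.mp hx, add_sub_cancel_left]⟩
  · exact .inr ⟨sub_eq_zero.mp hx, by rw [hy, sub_eq_zero.mp hx, add_sub_cancel_right]⟩

theorem mul_eq_and_add_eq_iff {K L : Type*} [Field K] [Field L] [Algebra K L] {a b : K} {r s : L}
    (hadd : r + s = algebraMap K L b) (hmul : r * s = algebraMap K L a) (z : K × K) :
    z.1 * z.2 = a ∧ z.1 + z.2 = b ↔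
      algebraMap K L z.1 = r ∧ algebraMap K L z.2 = s ∨
        algebraMap K L z.1 = s ∧ algebraMap K L z.2 = r := by
  rw [← (algebraMap K L).injective.eq_iff (a := z.1 * z.2),
    ← (algebraMap K L).injective.eq_iff (a := z.1 + z.2),
    map_mul, map_add, ← hadd, ← hmul]
  refine ⟨fun ⟨hN, hT⟩ => eq_and_eq_or_eq_and_eq_of_add_eq_of_mul_eq hT hN, ?_⟩
  rintro (⟨h1, h2⟩ | ⟨h1, h2⟩) <;> rw [h1, h2]
  · exact ⟨rfl, rfl⟩
  · exact ⟨mul_comm _ _, add_comm _ _⟩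

namespace FiniteField

variable {K L : Type*} [Field K] [Fintype K] [Field L] [Fintype L] [Algebra K L]

theorem algebraMap_norm_eq_mul_pow_card (h : Module.finrank K L = 2) (α : L) :
    algebraMap K L (Algebra.norm K α) = α * α ^ Fintype.card K := by
  simp [algebraMap_norm_eq_prod_pow, h, Finset.prod_range_succ]

theorem algebraMap_trace_eq_add_pow_card (h : Module.finrank K L = 2) (α : L) :
    algebraMap K L (Algebra.trace K L α) = α + α ^ Fintype.card K := by
  simp [algebraMap_trace_eq_sum_pow, h, Finset.sum_range_succ]

theorem exists_algebraMap_eq_of_pow_card_eq_self (hK : ringChar K ≠ 2)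
    (h : Module.finrank K L = 2) {α : L} (hα : α ^ Fintype.card K = α) :
    ∃ x : K, algebraMap K L x = α := by
  have h2 : (2 : L) ≠ 0 := Ring.two_ne_zero (Algebra.ringChar_eq K L ▸ hK)
  refine ⟨Algebra.trace K L α / 2, ?_⟩
  rw [map_div₀, algebraMap_trace_eq_add_pow_card h, hα, map_ofNat]
  field_simp
  ring

theorem exists_sq_eq_algebraMap (hK : ringChar K ≠ 2) (h : Module.finrank K L = 2) (d : K) :
    ∃ t : L, t ^ 2 = algebraMap K L d := by
  rcases eq_or_ne d 0 with rfl | hd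
  · exact ⟨0, by simp⟩
  have hcard : Fintype.card L / 2 = (Fintype.card K - 1) * ((Fintype.card K + 1) / 2) := by
    rw [Module.card_eq_pow_finrank (K := K), h]
    obtain ⟨m, hm⟩ : ∃ m, Fintype.card K = 2 * m + 1 :=
      ⟨Fintype.card K / 2, by have := odd_card_of_char_ne_two hK; omega⟩
    have hsq : (2 * m + 1) ^ 2 = 2 * (2 * m * (m + 1)) + 1 := by ring
    rw [hm, hsq, show (2 * m + 1 + 1) / 2 = m + 1 by omega, Nat.add_sub_cancel]
    omega
  obtain ⟨t, ht⟩ := (isSquare_iff (Algebra.ringChar_eq K L ▸ hK)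
    ((map_ne_zero (algebraMap K L)).mpr hd)).mpr (by
      rw [hcard, pow_mul, ← map_pow, pow_card_sub_one_eq_one d hd, map_one, one_pow])
  exact ⟨t, by rw [ht, sq]⟩

theorem exists_add_eq_and_mul_eq (hK : ringChar K ≠ 2) (h : Module.finrank K L = 2) (a b : K) :
    ∃ r s : L, r + s = algebraMap K L b ∧ r * s = algebraMap K L a := by
  have h2 : (2 : L) ≠ 0 := Ring.two_ne_zero (Algebra.ringChar_eq K L ▸ hK)
  obtain ⟨t, ht⟩ := exists_sq_eq_algebraMap hK h (b ^ 2 - 4 * a)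
  refine ⟨(algebraMap K L b + t) / 2, (algebraMap K L b - t) / 2, by field_simp; ring, ?_⟩
  field_simp
  simp only [map_sub, map_mul, map_pow, map_ofNat] at ht
  linear_combination -ht

theorem norm_eq_and_trace_eq_iff (h : Module.finrank K L = 2) {a b : K} {r s : L}
    (hadd : r + s = algebraMap K L b) (hmul : r * s = algebraMap K L a) (α : L) :
    Algebra.norm K α = a ∧ Algebra.trace K L α = b ↔
      α = r ∧ r ^ Fintype.card K = s ∨ α = s ∧ s ^ Fintype.card K = r := by
  rw [← (algebraMap K L).injective.eq_iff (a := Algebra.norm K α),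
    ← (algebraMap K L).injective.eq_iff (a := Algebra.trace K L α),
    algebraMap_norm_eq_mul_pow_card h, algebraMap_trace_eq_add_pow_card h, ← hadd, ← hmul]
  constructor
  · rintro ⟨hN, hT⟩
    rcases eq_and_eq_or_eq_and_eq_of_add_eq_of_mul_eq hT hN with ⟨rfl, h⟩ | ⟨rfl, h⟩
    exacts [.inl ⟨rfl, h⟩, .inr ⟨rfl, h⟩]
  · rintro (⟨rfl, rfl⟩ | ⟨rfl, rfl⟩)
    · exact ⟨rfl, rfl⟩
    · exact ⟨mul_comm _ _, add_comm _ _⟩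

theorem pow_card_eq_of_not_exists_algebraMap_eq (hK : ringChar K ≠ 2) (h : Module.finrank K L = 2)
    {a b : K} {r s : L} (hadd : r + s = algebraMap K L b) (hmul : r * s = algebraMap K L a)
    (hr : ¬∃ x : K, algebraMap K L x = r) :
    r ^ Fintype.card K = s ∧ s ^ Fintype.card K = r := by
  have hadd' : r ^ Fintype.card K + s ^ Fintype.card K = r + s :=
    calc r ^ Fintype.card K + s ^ Fintype.card K = frobeniusAlgHom K L (r + s) :=
          (map_add (frobeniusAlgHom K L) r s).symm
      _ = r + s := by rw [hadd, AlgHom.commutes]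
  have hmul' : r ^ Fintype.card K * s ^ Fintype.card K = r * s :=
    calc r ^ Fintype.card K * s ^ Fintype.card K = frobeniusAlgHom K L (r * s) :=
          (map_mul (frobeniusAlgHom K L) r s).symm
      _ = r * s := by rw [hmul, AlgHom.commutes]
  refine (eq_and_eq_or_eq_and_eq_of_add_eq_of_mul_eq hadd' hmul').resolve_left fun hfix => ?_
  exact hr (exists_algebraMap_eq_of_pow_card_eq_self hK h hfix.1)

theorem card_filter_norm_trace_add_card_filter_mul_add [DecidableEq K] [DecidableEq L]
    (hK : ringChar K ≠ 2) (h : Module.finrank K L = 2) (a b : K) :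
    #{α : L | Algebra.norm K α = a ∧ Algebra.trace K L α = b} +
      #{z : K × K | z.1 * z.2 = a ∧ z.1 + z.2 = b} = 2 := by
  obtain ⟨r, s, hadd, hmul⟩ := exists_add_eq_and_mul_eq hK h a b
  simp only [norm_eq_and_trace_eq_iff h hadd hmul, mul_eq_and_add_eq_iff hadd hmul]
  by_cases hr : ∃ x : K, algebraMap K L x = r
  · obtain ⟨x, rfl⟩ := hr
    obtain ⟨y, rfl⟩ : ∃ y : K, algebraMap K L y = s :=
      ⟨b - x, by rw [map_sub, ← hadd, add_sub_cancel_left]⟩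
    simp only [← map_pow, pow_card, (algebraMap K L).injective.eq_iff]
    rcases eq_or_ne x y with rfl | hxy
    · have hfib : ({z : K × K | z.1 = x ∧ z.2 = x} : Finset _) = {(x, x)} := by
        ext z; simp [Prod.ext_iff]
      simp [hfib, filter_eq']
    · have hfib : ({z : K × K | z.1 = x ∧ z.2 = y ∨ z.1 = y ∧ z.2 = x} : Finset _) =
          {(x, y), (y, x)} := by
        ext z; simp [Prod.ext_iff]
      simp [hfib, hxy, hxy.symm]
  · obtain ⟨hrs, hsr⟩ := pow_card_eq_of_not_exists_algebraMap_eq hK h hadd hmul hr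
    have hs : ¬∃ y : K, algebraMap K L y = s := fun ⟨y, hy⟩ =>
      hr ⟨b - y, by rw [map_sub, hy, ← hadd, add_sub_cancel_right]⟩
    have hne : r ≠ s := fun hrs' =>
      hr (exists_algebraMap_eq_of_pow_card_eq_self hK h (hrs.trans hrs'.symm))
    have hfib : ({α : L | α = r ∨ α = s} : Finset _) = {r, s} := by
      ext α; simp
    push Not at hr hs
    simp [hrs, hsr, hr, hs, hfib, card_pair hne]

theorem sum_norm_trace_add_sum_mul_add {M : Type*} [AddCommMonoid M]
    (hK : ringChar K ≠ 2) (h : Module.finrank K L = 2) (G : K × K → M) :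
    ∑ α : L, G (Algebra.norm K α, Algebra.trace K L α) + ∑ z : K × K, G (z.1 * z.2, z.1 + z.2) =
      2 • ∑ w : K × K, G w := by
  classical
  rw [← sum_fiberwise' univ (fun α : L => (Algebra.norm K α, Algebra.trace K L α)) G,
    ← sum_fiberwise' univ (fun z : K × K => (z.1 * z.2, z.1 + z.2)) G, ← sum_add_distrib, smul_sum]
  refine sum_congr rfl fun w _ => ?_
  rw [sum_const, sum_const, ← add_smul]
  congr 1
  simpa only [Prod.ext_iff] using card_filter_norm_trace_add_card_filter_mul_add hK h w.1 w.2

end FiniteField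

open FiniteField in
theorem two_mul_double_sum_eq_general (p : ℕ) [Fact p.Prime] (hp : 5 ≤ p)
    (α₁ α₂ α₃ : ZMod p)
    (f : Polynomial (ZMod p))
    (hf : f = X * (X - 1) * (X - C α₁) * (X - C α₂) * (X - C α₃))
    (F : Type*) [Field F] [Fintype F] (hF : Fintype.card F = p ^ 2)
    (ι : ZMod p →+* F)
    (S : ZMod p)
    (hS : S = ∑ z : ZMod p × ZMod p,
      (z.1 * (1 + z.2 + z.1) *
        ((α₁ ^ 2 + α₁ * z.2 + z.1) * (α₂ ^ 2 + α₂ * z.2 + z.1) *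
          (α₃ ^ 2 + α₃ * z.2 + z.1))) ^ ((p - 1) / 2)) :
    2 * ι S =
      (∑ α : F, ((f.map ι).eval α * (f.map ι).eval (α ^ p)) ^ ((p - 1) / 2)) +
        ι (∑ z : ZMod p × ZMod p, (f.eval z.1 * f.eval z.2) ^ ((p - 1) / 2)) := by
  let := ι.toAlgebra
  have hK : ringChar (ZMod p) ≠ 2 := by rw [ZMod.ringChar_zmod_n]; omega
  have hfin : Module.finrank (ZMod p) F = 2 := by
    refine Nat.pow_right_injective (Fact.out : p.Prime).two_le ?_
    simp only [← hF, Module.card_eq_pow_finrank (K := ZMod p) (V := F), ZMod.card]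
  set G : ZMod p × ZMod p → ZMod p := fun w => (w.1 * (1 - w.2 + w.1) *
    ((α₁ ^ 2 - α₁ * w.2 + w.1) * (α₂ ^ 2 - α₂ * w.2 + w.1) * (α₃ ^ 2 - α₃ * w.2 + w.1))) ^
      ((p - 1) / 2) with hG
  have hnorm_trace (α : F) : ((f.map ι).eval α * (f.map ι).eval (α ^ p)) ^ ((p - 1) / 2) =
      ι (G (Algebra.norm (ZMod p) α, Algebra.trace (ZMod p) F α)) := by
    have hN : ι (Algebra.norm (ZMod p) α) = α * α ^ p := by
      have := algebraMap_norm_eq_mul_pow_card hfin α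
      rwa [ZMod.card] at this
    have hT : ι (Algebra.trace (ZMod p) F α) = α + α ^ p := by
      have := algebraMap_trace_eq_add_pow_card hfin α
      rwa [ZMod.card] at this
    simp only [hG, map_pow, map_mul, map_sub, map_add, map_one, hN, hT, hf, Polynomial.map_mul,
      Polynomial.map_sub, Polynomial.map_X, Polynomial.map_one, Polynomial.map_C, eval_mul,
      eval_sub, eval_X, eval_C, eval_one]
    ring
  have hmul_add (z : ZMod p × ZMod p) :
      (f.eval z.1 * f.eval z.2) ^ ((p - 1) / 2) = G (z.1 * z.2, z.1 + z.2) := by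
    simp only [hG, hf, eval_mul, eval_sub, eval_X, eval_C, eval_one]
    ring
  have hSG : S = ∑ w : ZMod p × ZMod p, G w := by
    rw [hS, ← (Equiv.prodCongr (Equiv.refl _) (Equiv.neg _)).sum_comp]
    refine sum_congr rfl fun z _ => ?_
    simp only [hG, Equiv.prodCongr_apply, Equiv.coe_refl, Equiv.neg_apply, Prod.map, id]
    ring
  calc 2 * ι S = 2 • ∑ w, ι (G w) := by rw [hSG, map_sum, two_nsmul, two_mul]
    _ = _ := (sum_norm_trace_add_sum_mul_add hK hfin fun w => ι (G w)).symm
    _ = _ := by simp only [hnorm_trace, hmul_add, map_sum]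

/-- The double sum `S = ∑_{(a,b)} (a(1+b+a)∏ᵢ(αᵢ² + αᵢb + a))^((p-1)/2)` satisfies
`2·ι(S) = ∑_{α ∈ F} (f̃(α)f̃(α^p))^((p-1)/2) + ι(∑_{(α,β)} (f(α)f(β))^((p-1)/2))`,
where `F` has `p²` elements and `f̃` is the image of `f` in `F[X]`. -/
theorem two_mul_double_sum_eq (p : ℕ) [Fact p.Prime] (hp : 5 ≤ p)
    (α₁ α₂ α₃ : ZMod p)
    (h12 : α₁ ≠ α₂) (h13 : α₁ ≠ α₃) (h23 : α₂ ≠ α₃)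
    (h10 : α₁ ≠ 0) (h20 : α₂ ≠ 0) (h30 : α₃ ≠ 0)
    (h11 : α₁ ≠ 1) (h21 : α₂ ≠ 1) (h31 : α₃ ≠ 1)
    (f : Polynomial (ZMod p))
    (hf : f = X * (X - 1) * (X - C α₁) * (X - C α₂) * (X - C α₃))
    (F : Type*) [Field F] [Fintype F] (hF : Fintype.card F = p ^ 2)
    (ι : ZMod p →+* F)
    (S : ZMod p)
    (hS : S = ∑ z : ZMod p × ZMod p,
      (z.1 * (1 + z.2 + z.1) *
        ((α₁ ^ 2 + α₁ * z.2 + z.1) * (α₂ ^ 2 + α₂ * z.2 + z.1) *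
          (α₃ ^ 2 + α₃ * z.2 + z.1))) ^ ((p - 1) / 2)) :
    2 * ι S =
      (∑ α : F, ((f.map ι).eval α * (f.map ι).eval (α ^ p)) ^ ((p - 1) / 2)) +
        ι (∑ z : ZMod p × ZMod p, (f.eval z.1 * f.eval z.2) ^ ((p - 1) / 2)) :=
  two_mul_double_sum_eq_general p hp α₁ α₂ α₃ f hf F hF ι S hS
end

section
/- Let p be an odd prime, r = (p−1)/2, and λ ∈ 𝔽_p. Then the coefficient of X^{p−1} in the polynomial ( X·(X−1)·(X−λ) )^{r} ∈ 𝔽_p[X] equals (−1)^{r} · ∑_{i=0}^{r} (binom(r,i))² · λ^i. -/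
open Polynomial Finset

lemma coeff_X_sub_C_pow' {R : Type*} [CommRing R] (a : R) (n k : ℕ) :
    ((X - C a) ^ n).coeff k = (-a) ^ (n - k) * (n.choose k : R) := by
  rw [sub_eq_add_neg, ← C_neg, coeff_X_add_C_pow]

/-- For an odd prime `p`, `r = (p-1)/2` and `λ ∈ 𝔽_p`, the coefficient of `X^(p-1)` in
`(X(X-1)(X-λ))^r` equals `(-1)^r · ∑_{i=0}^{r} binom(r,i)² λ^i`. -/
theorem coeff_cubic_pow_eq_deuring (p : ℕ) [Fact p.Prime] (hp : p ≠ 2)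
    (r : ℕ) (hr : r = (p - 1) / 2) (lam : ZMod p) :
    ((X * (X - 1) * (X - C lam)) ^ r : Polynomial (ZMod p)).coeff (p - 1) =
      (-1) ^ r *
        ∑ i ∈ Finset.range (r + 1), ((r.choose i : ZMod p)) ^ 2 * lam ^ i := by
  have hodd : Odd p := (Fact.out : p.Prime).odd_of_ne_two hp
  have hp1 : p - 1 = r + r := by
    obtain ⟨k, hk⟩ := hodd; omega
  rw [hp1, mul_pow, mul_pow, mul_assoc, coeff_X_pow_mul, coeff_mul,
    Finset.Nat.sum_antidiagonal_eq_sum_range_succ_mk, Finset.mul_sum]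
  refine Finset.sum_congr rfl fun i hi => ?_
  rw [Finset.mem_range] at hi
  have hi' : i ≤ r := by omega
  have h1 : (X - 1 : Polynomial (ZMod p)) = X - C 1 := by simp
  rw [h1, coeff_X_sub_C_pow', coeff_X_sub_C_pow', Nat.choose_symm hi']
  have h2 : r - (r - i) = i := by omega
  have h3 : ((-1 : ZMod p)) ^ (r - i) * (-lam) ^ i = (-1) ^ r * lam ^ i := by
    rw [neg_pow lam, ← mul_assoc, ← pow_add]
    congr 2
    omega
  simp only [h2]
  calc (-1 : ZMod p) ^ (r - i) * ↑(r.choose i) * ((-lam) ^ i * ↑(r.choose i))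
      = ((-1) ^ (r - i) * (-lam) ^ i) * (↑(r.choose i) * ↑(r.choose i)) := by ring
    _ = (-1) ^ r * (↑(r.choose i) ^ 2 * lam ^ i) := by rw [h3]; ring
end

section
/- With f = X(X−1)(X−α₁)(X−α₂)(X−α₃) ∈ 𝔽_p[X], c_k the coefficient of X^k in f^{(p−1)/2}, F a finite field with p² elements, and f̃ ∈ F[X] the image of f under the embedding 𝔽_p → F, one has ∑_{α ∈ F} f̃(α)^{(p²−1)/2} = −( 2·c̃_{p−2}·c̃_{2p−1} + c̃_{p−1}² + c̃_{2p−2}² ), where c̃_k is the image of c_k in F. (This is the sum of the preceding statement since f̃(α^p) = f̃(α)^p for f with coefficients in 𝔽_p, so f̃(α)·f̃(α^p) = f̃(α)^{p+1}.) -/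
/-!
Put `g = f̃ ^ ((p - 1) / 2) = ∑ c̃ₖ Xᵏ`. Its coefficients lie in `𝔽_p`, so `g(α)ᵖ = g(αᵖ)` and the
summand is `g(αᵖ) g(α) = ∑_{j,k} c̃ⱼ c̃ₖ α^(p j + k)`. Summing `αᵐ` over `F` gives `-1` when `m`
is a positive multiple of `p² - 1` and `0` otherwise. As `deg g ≤ 5 (p - 1) / 2`, we have
`p j + k < 3 (p² - 1)`, and the only pairs hitting `p² - 1` or `2 (p² - 1)` are
`(p-1, p-1)`, `(p-2, 2p-1)`, `(2p-2, 2p-2)`, `(2p-1, p-2)`.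
-/

open Polynomial Finset

theorem FiniteField.sum_pow_eq_ite {K : Type*} [Field K] [Fintype K] (m : ℕ) :
    ∑ x : K, x ^ m = if m ≠ 0 ∧ Fintype.card K - 1 ∣ m then -1 else 0 := by
  classical
  rcases eq_or_ne m 0 with rfl | hm
  · simp
  have sum_units : ∑ x : Kˣ, (x : K) ^ m = ∑ x ∈ {0}ᶜ, x ^ m := by
    rw [Finset.sum_subtype {0}ᶜ (p := (· ≠ 0)) (by simp)]
    exact Fintype.sum_equiv unitsEquivNeZero _ _ fun _ ↦ rfl
  rw [Fintype.sum_eq_add_sum_compl 0, zero_pow hm, zero_add, ← sum_units,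
    FiniteField.sum_pow_units]
  simp [hm]

theorem Polynomial.eval_map_zmod_pow_char {p : ℕ} [Fact p.Prime] {R : Type*} [CommSemiring R]
    (ι : ZMod p →+* R) (P : (ZMod p)[X]) (x : R) :
    (P.map ι).eval x ^ p = (P.map ι).eval (x ^ p) := by
  rw [← expand_eval, ← map_expand, ZMod.expand_card, Polynomial.map_pow, eval_pow]

theorem FiniteField.sum_eval_pow_mul_eval {K : Type*} [Field K] [Fintype K] (g h : K[X])
    (a N : ℕ) (hg : g.natDegree < N) (hh : h.natDegree < N) :
    ∑ x : K, g.eval (x ^ a) * h.eval x =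
      -∑ jk ∈ range N ×ˢ range N with a * jk.1 + jk.2 ≠ 0 ∧ Fintype.card K - 1 ∣ a * jk.1 + jk.2,
        g.coeff jk.1 * h.coeff jk.2 := by
  calc ∑ x : K, g.eval (x ^ a) * h.eval x
      = ∑ x : K, ∑ jk ∈ range N ×ˢ range N,
          g.coeff jk.1 * h.coeff jk.2 * x ^ (a * jk.1 + jk.2) := by
        refine sum_congr rfl fun x _ ↦ ?_
        rw [eval_eq_sum_range' hg, eval_eq_sum_range' hh, sum_mul_sum, ← sum_product']
        refine sum_congr rfl fun jk _ ↦ ?_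
        ring
    _ = _ := by
        rw [sum_comm, sum_filter, ← sum_neg_distrib]
        refine sum_congr rfl fun jk _ ↦ ?_
        rw [← mul_sum, FiniteField.sum_pow_eq_ite]
        split_ifs <;> simp

theorem Nat.filter_mul_add_dvd_sq_sub_one {p : ℕ} (hp : 3 ≤ p) (hodd : Odd p) :
    {jk ∈ range (5 * ((p - 1) / 2) + 1) ×ˢ range (5 * ((p - 1) / 2) + 1) |
        p * jk.1 + jk.2 ≠ 0 ∧ p ^ 2 - 1 ∣ p * jk.1 + jk.2} =
      {(p - 1, p - 1), (p - 2, 2 * p - 1), (2 * p - 2, 2 * p - 2), (2 * p - 1, p - 2)} := by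
  obtain ⟨e, rfl⟩ : ∃ e, p = 2 * e + 3 := by obtain ⟨d, rfl⟩ := hodd; exact ⟨d - 1, by omega⟩
  have hsq : (2 * e + 3) ^ 2 - 1 = 4 * e ^ 2 + 12 * e + 8 := by
    rw [Nat.sub_eq_iff_eq_add (by nlinarith)]; ring
  rw [hsq, show 5 * ((2 * e + 3 - 1) / 2) + 1 = 5 * e + 6 by omega,
    show 2 * e + 3 - 1 = 2 * e + 2 by omega, show 2 * e + 3 - 2 = 2 * e + 1 by omega,
    show 2 * (2 * e + 3) - 1 = 4 * e + 5 by omega, show 2 * (2 * e + 3) - 2 = 4 * e + 4 by omega]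
  ext ⟨j, k⟩
  simp only [mem_filter, mem_product, mem_range, mem_insert, mem_singleton, Prod.mk.injEq]
  constructor
  · rintro ⟨⟨hj, hk⟩, hne, t, ht⟩
    -- `p j + k = t (p² - 1)` forces `k + t = m p` and `j + m = t p`, with `t, m ∈ {1, 2}`
    have ht0 : t ≠ 0 := by rintro rfl; omega
    have ht3 : t < 3 := by nlinarith
    obtain ⟨m, hm⟩ : 2 * e + 3 ∣ k + t :=
      (Nat.dvd_add_right (dvd_mul_right _ j)).mp ⟨t * (2 * e + 3), by nlinarith⟩
    have hm0 : m ≠ 0 := by rintro rfl; omega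
    have hm3 : m < 3 := by nlinarith
    have hjm : j + m = t * (2 * e + 3) := by
      apply Nat.eq_of_mul_eq_mul_left (show 0 < 2 * e + 3 by omega)
      nlinarith
    interval_cases t <;> interval_cases m <;> omega
  · rintro (⟨rfl, rfl⟩ | ⟨rfl, rfl⟩ | ⟨rfl, rfl⟩ | ⟨rfl, rfl⟩)
    · exact ⟨by omega, by positivity, 1, by ring⟩
    · exact ⟨by omega, by positivity, 1, by ring⟩
    · exact ⟨by omega, by positivity, 2, by ring⟩
    · exact ⟨by omega, by positivity, 2, by ring⟩

theorem sum_f_pow_quadratic_eq_general (p : ℕ) [Fact p.Prime] (hp : 5 ≤ p)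
    (α₁ α₂ α₃ : ZMod p)
    (f : Polynomial (ZMod p))
    (hf : f = X * (X - 1) * (X - C α₁) * (X - C α₂) * (X - C α₃))
    (c : ℕ → ZMod p) (hc : ∀ k, c k = (f ^ ((p - 1) / 2)).coeff k)
    (F : Type*) [Field F] [Fintype F] (hF : Fintype.card F = p ^ 2)
    (ι : ZMod p →+* F) :
    ∑ α : F, ((f.map ι).eval α) ^ ((p ^ 2 - 1) / 2) =
      -(2 * ι (c (p - 2)) * ι (c (2 * p - 1)) +
        ι (c (p - 1)) ^ 2 + ι (c (2 * p - 2)) ^ 2) := by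
  have hodd : Odd p := (Fact.out : p.Prime).odd_of_ne_two (by omega)
  set d := (p - 1) / 2
  set g : F[X] := (f ^ d).map ι
  have hdeg : g.natDegree < 5 * d + 1 := by
    have hf5 : f.natDegree ≤ 5 := by rw [hf]; compute_degree
    have : g.natDegree ≤ d * 5 := natDegree_map_le.trans (natDegree_pow_le_of_le d hf5)
    omega
  have hexp : (p ^ 2 - 1) / 2 = d * (p + 1) := by
    obtain ⟨e, rfl⟩ := hodd
    rw [show d = e by omega, show (2 * e + 1) ^ 2 = 2 * (e * (2 * e + 1 + 1)) + 1 by ring]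
    omega
  calc ∑ α : F, ((f.map ι).eval α) ^ ((p ^ 2 - 1) / 2)
      = ∑ α : F, g.eval (α ^ p) * g.eval α := by
        refine sum_congr rfl fun α _ ↦ ?_
        rw [hexp, pow_mul, ← eval_pow, ← Polynomial.map_pow, pow_succ,
          Polynomial.eval_map_zmod_pow_char]
    _ = -(2 * ι (c (p - 2)) * ι (c (2 * p - 1)) + ι (c (p - 1)) ^ 2 + ι (c (2 * p - 2)) ^ 2) := by
        rw [FiniteField.sum_eval_pow_mul_eval g g p _ hdeg hdeg, hF,
          Nat.filter_mul_add_dvd_sq_sub_one (by omega) hodd, sum_insert (by simp; omega),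
          sum_insert (by simp; omega), sum_insert (by simp; omega), sum_singleton]
        simp only [g, coeff_map, ← hc]
        ring

/-- For the quintic `f = X(X-1)(X-α₁)(X-α₂)(X-α₃)` over `𝔽_p` and `F` a field with `p²`
elements, with `f̃` the image of `f` in `F[X]`, one has
`∑_{α ∈ F} f̃(α)^((p²-1)/2) = -(2 c̃_{p-2} c̃_{2p-1} + c̃_{p-1}² + c̃_{2p-2}²)`. -/
theorem sum_f_pow_quadratic_eq (p : ℕ) [Fact p.Prime] (hp : 5 ≤ p)
    (α₁ α₂ α₃ : ZMod p)
    (h12 : α₁ ≠ α₂) (h13 : α₁ ≠ α₃) (h23 : α₂ ≠ α₃)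
    (h10 : α₁ ≠ 0) (h20 : α₂ ≠ 0) (h30 : α₃ ≠ 0)
    (h11 : α₁ ≠ 1) (h21 : α₂ ≠ 1) (h31 : α₃ ≠ 1)
    (f : Polynomial (ZMod p))
    (hf : f = X * (X - 1) * (X - C α₁) * (X - C α₂) * (X - C α₃))
    (c : ℕ → ZMod p) (hc : ∀ k, c k = (f ^ ((p - 1) / 2)).coeff k)
    (F : Type*) [Field F] [Fintype F] (hF : Fintype.card F = p ^ 2)
    (ι : ZMod p →+* F) :
    ∑ α : F, ((f.map ι).eval α) ^ ((p ^ 2 - 1) / 2) =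
      -(2 * ι (c (p - 2)) * ι (c (2 * p - 1)) +
        ι (c (p - 1)) ^ 2 + ι (c (2 * p - 2)) ^ 2) :=
  sum_f_pow_quadratic_eq_general p hp α₁ α₂ α₃ f hf c hc F hF ι
end
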